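/- Nonnegativity of redundancy: Red(Y; F, B) = I_P(Y; B) − Uni(Y; B|F) ≥ 0, i.e., Uni(Y; B|F) ≤ I_P(Y; B). -/

import Mathlib

open scoped BigOperators

section PID

/-- A joint probability distribution on a product of three finite types,
represented as a nonnegative function summing to one. -/
def IsDist3 {Y F B : Type*} [Fintype Y] [Fintype F] [Fintype B]
    (P : Y → F → B → ℝ) : Prop :=
  (∀ y f b, 0 ≤ P y f b) ∧ ∑ y, ∑ f, ∑ b, P y f b = 1

/-- Marginal on (Y, F). -/
def margYF {Y F B : Type*} [Fintype B] (P : Y → F → B → ℝ) (y : Y) (f : F) : ℝ :=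
  ∑ b, P y f b

/-- Marginal on (Y, B). -/
def margYB {Y F B : Type*} [Fintype F] (P : Y → F → B → ℝ) (y : Y) (b : B) : ℝ :=
  ∑ f, P y f b

/-- Marginal on (F, B). -/
def margFB {Y F B : Type*} [Fintype Y] (P : Y → F → B → ℝ) (f : F) (b : B) : ℝ :=
  ∑ y, P y f b

/-- Marginal on Y. -/
def margY {Y F B : Type*} [Fintype F] [Fintype B] (P : Y → F → B → ℝ) (y : Y) : ℝ :=
  ∑ f, ∑ b, P y f b

/-- Marginal on F. -/
def margF {Y F B : Type*} [Fintype Y] [Fintype B] (P : Y → F → B → ℝ) (f : F) : ℝ :=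
  ∑ y, ∑ b, P y f b

/-- Marginal on B. -/
def margB {Y F B : Type*} [Fintype Y] [Fintype F] (P : Y → F → B → ℝ) (b : B) : ℝ :=
  ∑ y, ∑ f, P y f b

/-- Conditional mutual information I_Q(Y ; B | F) for a joint distribution `Q`
on `Y × F × B` (natural log; `0 log 0 = 0` conventions via `Real.log 0 = 0`
and division-by-zero conventions). -/
noncomputable def condMI {Y F B : Type*} [Fintype Y] [Fintype F] [Fintype B]
    (Q : Y → F → B → ℝ) : ℝ :=
  ∑ y, ∑ f, ∑ b, Q y f b *
    Real.log ((Q y f b * margF Q f) / (margYF Q y f * margFB Q f b))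

/-- Mutual information I_P(Y ; B). -/
noncomputable def mutYB {Y F B : Type*} [Fintype Y] [Fintype F] [Fintype B]
    (P : Y → F → B → ℝ) : ℝ :=
  ∑ y, ∑ b, margYB P y b * Real.log (margYB P y b / (margY P y * margB P b))

/-- Mutual information I_P(Y ; F). -/
noncomputable def mutYF {Y F B : Type*} [Fintype Y] [Fintype F] [Fintype B]
    (P : Y → F → B → ℝ) : ℝ :=
  ∑ y, ∑ f, margYF P y f * Real.log (margYF P y f / (margY P y * margF P f))

/-- Mutual information I_P(Y ; (F, B)). -/
noncomputable def mutYFB {Y F B : Type*} [Fintype Y] [Fintype F] [Fintype B]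
    (P : Y → F → B → ℝ) : ℝ :=
  ∑ y, ∑ f, ∑ b, P y f b * Real.log (P y f b / (margY P y * margFB P f b))

/-- The feasible set Δ_P of joint distributions matching the (Y,F) and (Y,B)
marginals of `P`. -/
def Delta {Y F B : Type*} [Fintype Y] [Fintype F] [Fintype B]
    (P : Y → F → B → ℝ) : Set (Y → F → B → ℝ) :=
  {Q | IsDist3 Q ∧ (∀ y f, margYF Q y f = margYF P y f) ∧
      (∀ y b, margYB Q y b = margYB P y b)}

/-- Unique information Uni(Y ; B | F) (Bertschinger et al.):
the infimum of I_Q(Y ; B | F) over Q ∈ Δ_P. -/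
noncomputable def uni {Y F B : Type*} [Fintype Y] [Fintype F] [Fintype B]
    (P : Y → F → B → ℝ) : ℝ :=
  sInf (condMI '' Delta P)

/-- A matrix with entries in [0,1] whose rows each sum to 1. -/
def RowStochastic {F B : Type*} [Fintype B] (T : F → B → ℝ) : Prop :=
  (∀ f b, 0 ≤ T f b ∧ T f b ≤ 1) ∧ ∀ f, ∑ b, T f b = 1

end PID

/-!
The coupling `Q(y,f,b) = P(y,f) P(b|y)` lies in `Δ_P` and makes `F` and `B` conditionally
independent given `Y`. For such a `Q` the chain rule reads
`I_Q(Y;B) = I_Q(Y;B|F) + I_Q(F;B)`, and `I_Q(F;B) ≥ 0` by Gibbs' inequality. As `Q` has the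
`(Y,B)`-marginal of `P`, `I_Q(Y;B) = I_P(Y;B)`, so `Uni(Y;B|F) ≤ I_Q(Y;B|F) ≤ I_P(Y;B)`.
-/

open Finset Real

lemma sub_le_mul_log_div {a b : ℝ} (ha : 0 ≤ a) (hb : 0 ≤ b) (hab : 0 < a → 0 < b) :
    a - b ≤ a * log (a / b) := by
  rcases ha.eq_or_lt with rfl | ha
  · simpa using hb
  have hb := hab ha
  calc a - b = a * (1 - (a / b)⁻¹) := by field_simp
    _ ≤ a * log (a / b) := by gcongr; exact one_sub_inv_le_log_of_pos (by positivity)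

lemma sum_mul_log_div_nonneg {ι : Type*} [Fintype ι] {a b : ι → ℝ} (ha : ∀ i, 0 ≤ a i)
    (hb : ∀ i, 0 ≤ b i) (hab : ∀ i, 0 < a i → 0 < b i) (hsum : ∑ i, b i ≤ ∑ i, a i) :
    0 ≤ ∑ i, a i * log (a i / b i) :=
  calc 0 ≤ ∑ i, a i - ∑ i, b i := sub_nonneg.2 hsum
    _ = ∑ i, (a i - b i) := (sum_sub_distrib ..).symm
    _ ≤ ∑ i, a i * log (a i / b i) :=
      sum_le_sum fun i _ => sub_le_mul_log_div (ha i) (hb i) (hab i)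

section Marginals

variable {Y F B : Type*} {Q : Y → F → B → ℝ}

lemma margYF_pos [Fintype B] (hQ : ∀ y f b, 0 ≤ Q y f b) {y : Y} {f : F} {b : B}
    (h : 0 < Q y f b) : 0 < margYF Q y f :=
  sum_pos' (fun b _ => hQ y f b) ⟨b, mem_univ b, h⟩

lemma margYB_pos [Fintype F] (hQ : ∀ y f b, 0 ≤ Q y f b) {y : Y} {f : F} {b : B}
    (h : 0 < Q y f b) : 0 < margYB Q y b :=
  sum_pos' (fun f _ => hQ y f b) ⟨f, mem_univ f, h⟩

lemma margFB_pos [Fintype Y] (hQ : ∀ y f b, 0 ≤ Q y f b) {y : Y} {f : F} {b : B}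
    (h : 0 < Q y f b) : 0 < margFB Q f b :=
  sum_pos' (fun y _ => hQ y f b) ⟨y, mem_univ y, h⟩

lemma margY_pos [Fintype F] [Fintype B] (hQ : ∀ y f b, 0 ≤ Q y f b) {y : Y} {f : F} {b : B}
    (h : 0 < Q y f b) : 0 < margY Q y :=
  sum_pos' (fun f _ => sum_nonneg fun b _ => hQ y f b) ⟨f, mem_univ f, margYF_pos hQ h⟩

lemma margF_pos [Fintype Y] [Fintype B] (hQ : ∀ y f b, 0 ≤ Q y f b) {y : Y} {f : F} {b : B}
    (h : 0 < Q y f b) : 0 < margF Q f :=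
  sum_pos' (fun y _ => sum_nonneg fun b _ => hQ y f b) ⟨y, mem_univ y, margYF_pos hQ h⟩

lemma margB_pos [Fintype Y] [Fintype F] (hQ : ∀ y f b, 0 ≤ Q y f b) {y : Y} {f : F} {b : B}
    (h : 0 < Q y f b) : 0 < margB Q b :=
  sum_pos' (fun y _ => sum_nonneg fun f _ => hQ y f b) ⟨y, mem_univ y, margYB_pos hQ h⟩

lemma exists_pos_of_margFB_pos [Fintype Y] {f : F} {b : B} (h : 0 < margFB Q f b) :
    ∃ y, 0 < Q y f b := by
  obtain ⟨y, -, hy⟩ := exists_lt_of_sum_lt (show ∑ _ : Y, (0 : ℝ) < margFB Q f b by simpa)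
  exact ⟨y, hy⟩

lemma margF_eq_sum_margFB [Fintype Y] [Fintype B] (f : F) :
    margF Q f = ∑ b, margFB Q f b :=
  sum_comm

lemma margY_eq_sum_margYB [Fintype F] [Fintype B] (y : Y) :
    margY Q y = ∑ b, margYB Q y b :=
  sum_comm

lemma margB_eq_sum_margYB [Fintype Y] [Fintype F] (b : B) :
    margB Q b = ∑ y, margYB Q y b :=
  rfl

end Marginals

lemma mutYB_congr {Y F B : Type*} [Fintype Y] [Fintype F] [Fintype B] {P Q : Y → F → B → ℝ}
    (h : ∀ y b, margYB Q y b = margYB P y b) : mutYB Q = mutYB P := by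
  simp only [mutYB, margY_eq_sum_margYB, margB_eq_sum_margYB, h]

lemma sum_margYF_mul_margFB_div_margF {Y F B : Type*} [Fintype Y] [Fintype F] [Fintype B]
    (Q : Y → F → B → ℝ) :
    ∑ y, ∑ f, ∑ b, margYF Q y f * margFB Q f b / margF Q f = ∑ y, ∑ f, ∑ b, Q y f b :=
  calc _ = ∑ f, (∑ y, margYF Q y f) * (∑ b, margFB Q f b) / margF Q f := by
        rw [sum_comm]; simp_rw [sum_mul_sum, sum_div]
    _ = ∑ f, margF Q f * margF Q f / margF Q f := by
        simp_rw [← margF_eq_sum_margFB]; rfl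
    _ = ∑ y, ∑ f, ∑ b, Q y f b := by
        simp_rw [mul_self_div_self]; exact sum_comm

lemma condMI_nonneg {Y F B : Type*} [Fintype Y] [Fintype F] [Fintype B]
    {Q : Y → F → B → ℝ} (hQ : ∀ y f b, 0 ≤ Q y f b) : 0 ≤ condMI Q := by
  have h := sum_mul_log_div_nonneg (ι := Y × F × B) (a := fun x => Q x.1 x.2.1 x.2.2)
    (b := fun x => margYF Q x.1 x.2.1 * margFB Q x.2.1 x.2.2 / margF Q x.2.1)
    (fun _ => hQ ..)
    (fun _ => div_nonneg (mul_nonneg (sum_nonneg fun _ _ => hQ ..) (sum_nonneg fun _ _ => hQ ..))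
      (sum_nonneg fun _ _ => sum_nonneg fun _ _ => hQ ..))
    (fun _ hx => div_pos (mul_pos (margYF_pos hQ hx) (margFB_pos hQ hx)) (margF_pos hQ hx))
    (by simp only [Fintype.sum_prod_type, sum_margYF_mul_margFB_div_margF, le_refl])
  simp only [Fintype.sum_prod_type, div_div_eq_mul_div] at h
  exact h

lemma uni_le_condMI {Y F B : Type*} [Fintype Y] [Fintype F] [Fintype B]
    {P Q : Y → F → B → ℝ} (hQ : Q ∈ Delta P) : uni P ≤ condMI Q :=
  csInf_le ⟨0, by rintro _ ⟨R, hR, rfl⟩; exact condMI_nonneg hR.1.1⟩ ⟨Q, hQ, rfl⟩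

noncomputable def mutFB {Y F B : Type*} [Fintype Y] [Fintype F] [Fintype B]
    (Q : Y → F → B → ℝ) : ℝ :=
  ∑ f, ∑ b, margFB Q f b * log (margFB Q f b / (margF Q f * margB Q b))

section Totals

variable {Y F B : Type*} [Fintype Y] [Fintype F] [Fintype B] {Q : Y → F → B → ℝ}

lemma IsDist3.sum_margF (hQ : IsDist3 Q) : ∑ f, margF Q f = 1 :=
  sum_comm.trans hQ.2

lemma IsDist3.sum_margB (hQ : IsDist3 Q) : ∑ b, margB Q b = 1 :=
  calc ∑ b, margB Q b = ∑ y, ∑ b, ∑ f, Q y f b := sum_comm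
    _ = 1 := by simp_rw [sum_comm (s := (univ : Finset B))]; exact hQ.2

lemma IsDist3.sum_margFB (hQ : IsDist3 Q) : ∑ f, ∑ b, margFB Q f b = 1 := by
  simp_rw [← margF_eq_sum_margFB]; exact hQ.sum_margF

end Totals

lemma mutFB_nonneg {Y F B : Type*} [Fintype Y] [Fintype F] [Fintype B]
    {Q : Y → F → B → ℝ} (hQ : IsDist3 Q) : 0 ≤ mutFB Q := by
  have hQ0 := hQ.1
  have h := sum_mul_log_div_nonneg (ι := F × B) (a := fun x => margFB Q x.1 x.2)
    (b := fun x => margF Q x.1 * margB Q x.2)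
    (fun _ => sum_nonneg fun _ _ => hQ0 ..)
    (fun _ => mul_nonneg (sum_nonneg fun _ _ => sum_nonneg fun _ _ => hQ0 ..)
      (sum_nonneg fun _ _ => sum_nonneg fun _ _ => hQ0 ..))
    (fun x hx => by
      obtain ⟨y, hy⟩ := exists_pos_of_margFB_pos hx
      exact mul_pos (margF_pos hQ0 hy) (margB_pos hQ0 hy))
    (by simp only [Fintype.sum_prod_type, ← sum_mul_sum, hQ.sum_margF, hQ.sum_margB,
          hQ.sum_margFB, mul_one, le_refl])
  simp only [Fintype.sum_prod_type] at h
  exact h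

def CondIndepGivenY {Y F B : Type*} [Fintype F] [Fintype B] (Q : Y → F → B → ℝ) : Prop :=
  ∀ y f b, Q y f b * margY Q y = margYF Q y f * margYB Q y b

namespace CondIndepGivenY

variable {Y F B : Type*} [Fintype Y] [Fintype F] [Fintype B] {Q : Y → F → B → ℝ}

lemma log_split (hQ : ∀ y f b, 0 ≤ Q y f b) (hM : CondIndepGivenY Q) {y : Y} {f : F} {b : B}
    (h : 0 < Q y f b) :
    log (margYB Q y b / (margY Q y * margB Q b)) =
      log (Q y f b * margF Q f / (margYF Q y f * margFB Q f b)) +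
        log (margFB Q f b / (margF Q f * margB Q b)) := by
  have := margYF_pos hQ h
  have := margYB_pos hQ h
  have := margFB_pos hQ h
  have := margY_pos hQ h
  have := margF_pos hQ h
  have := margB_pos hQ h
  -- The right side is `log (Q / (Q_YF Q_B))`, and `Q / Q_YF = Q_YB / Q_Y`.
  rw [← log_mul (by positivity) (by positivity)]
  congr 1
  field_simp
  linear_combination -hM y f b

lemma mutYB_eq_condMI_add_mutFB (hQ : ∀ y f b, 0 ≤ Q y f b) (hM : CondIndepGivenY Q) :
    mutYB Q = condMI Q + mutFB Q := by
  have hYB : mutYB Q =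
      ∑ y, ∑ f, ∑ b, Q y f b * log (margYB Q y b / (margY Q y * margB Q b)) := by
    unfold mutYB
    refine sum_congr rfl fun y _ => ?_
    rw [sum_comm]
    simp only [← sum_mul]
    rfl
  have hFB : mutFB Q =
      ∑ y, ∑ f, ∑ b, Q y f b * log (margFB Q f b / (margF Q f * margB Q b)) := by
    rw [sum_comm]
    refine sum_congr rfl fun f _ => ?_
    rw [sum_comm]
    simp only [← sum_mul]
    rfl
  rw [hYB, hFB, condMI]
  simp only [← sum_add_distrib, ← mul_add]
  refine sum_congr rfl fun y _ => sum_congr rfl fun f _ => sum_congr rfl fun b _ => ?_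
  rcases (hQ y f b).eq_or_lt with h | h
  · simp [← h]
  · rw [hM.log_split hQ h]

end CondIndepGivenY

noncomputable def condIndepCoupling {Y F B : Type*} [Fintype F] [Fintype B]
    (P : Y → F → B → ℝ) (y : Y) (f : F) (b : B) : ℝ :=
  margYF P y f * margYB P y b / margY P y

section Coupling

variable {Y F B : Type*} [Fintype F] [Fintype B] {P : Y → F → B → ℝ}

lemma margYF_eq_zero_of_margY_eq_zero (hP : ∀ y f b, 0 ≤ P y f b) {y : Y} (h : margY P y = 0)
    (f : F) : margYF P y f = 0 :=
  (sum_eq_zero_iff_of_nonneg fun f _ => sum_nonneg fun b _ => hP y f b).1 h f (mem_univ f)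

lemma margYB_eq_zero_of_margY_eq_zero (hP : ∀ y f b, 0 ≤ P y f b) {y : Y} (h : margY P y = 0)
    (b : B) : margYB P y b = 0 :=
  (sum_eq_zero_iff_of_nonneg fun b _ => sum_nonneg fun f _ => hP y f b).1
    ((margY_eq_sum_margYB y).symm.trans h) b (mem_univ b)

lemma margYF_condIndepCoupling (hP : ∀ y f b, 0 ≤ P y f b) (y : Y) (f : F) :
    margYF (condIndepCoupling P) y f = margYF P y f :=
  calc ∑ b, margYF P y f * margYB P y b / margY P y
      = margYF P y f * margY P y / margY P y := by
        rw [margY_eq_sum_margYB, mul_sum, sum_div]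
    _ = margYF P y f := mul_div_cancel_of_imp (margYF_eq_zero_of_margY_eq_zero hP · f)

lemma margYB_condIndepCoupling (hP : ∀ y f b, 0 ≤ P y f b) (y : Y) (b : B) :
    margYB (condIndepCoupling P) y b = margYB P y b :=
  calc ∑ f, margYF P y f * margYB P y b / margY P y
      = margY P y * margYB P y b / margY P y := by
        rw [margY, sum_mul, sum_div]; rfl
    _ = margYB P y b := mul_div_cancel_left_of_imp (margYB_eq_zero_of_margY_eq_zero hP · b)

lemma margY_condIndepCoupling (hP : ∀ y f b, 0 ≤ P y f b) (y : Y) :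
    margY (condIndepCoupling P) y = margY P y :=
  sum_congr rfl fun f _ => margYF_condIndepCoupling hP y f

lemma condIndepGivenY_condIndepCoupling (hP : ∀ y f b, 0 ≤ P y f b) :
    CondIndepGivenY (condIndepCoupling P) := fun y f b => by
  rw [margY_condIndepCoupling hP, margYF_condIndepCoupling hP, margYB_condIndepCoupling hP]
  exact div_mul_cancel_of_imp fun h => by rw [margYF_eq_zero_of_margY_eq_zero hP h, zero_mul]

lemma condIndepCoupling_mem_Delta [Fintype Y] (hP : IsDist3 P) :
    condIndepCoupling P ∈ Delta P :=
  ⟨⟨fun _ _ _ => div_nonneg (mul_nonneg (sum_nonneg fun _ _ => hP.1 ..)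
      (sum_nonneg fun _ _ => hP.1 ..)) (sum_nonneg fun _ _ => sum_nonneg fun _ _ => hP.1 ..),
    (sum_congr rfl fun y _ => margY_condIndepCoupling hP.1 y).trans hP.2⟩,
    margYF_condIndepCoupling hP.1, margYB_condIndepCoupling hP.1⟩

end Coupling

/-- nonnegativity of redundancy:
Red(Y;F,B) = I_P(Y;B) − Uni(Y;B|F) ≥ 0. -/
theorem stmt13 {Y F B : Type*} [Fintype Y] [Fintype F] [Fintype B]
    (P : Y → F → B → ℝ) (hP : IsDist3 P) :
    0 ≤ mutYB P - uni P := by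
  set Q := condIndepCoupling P
  have hQ : Q ∈ Delta P := condIndepCoupling_mem_Delta hP
  have hM : CondIndepGivenY Q := condIndepGivenY_condIndepCoupling hP.1
  suffices uni P ≤ mutYB P from sub_nonneg.2 this
  calc uni P ≤ condMI Q := uni_le_condMI hQ
    _ ≤ condMI Q + mutFB Q := le_add_of_nonneg_right (mutFB_nonneg hQ.1)
    _ = mutYB Q := (hM.mutYB_eq_condMI_add_mutFB hQ.1.1).symm
    _ = mutYB P := mutYB_congr hQ.2.2
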